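/- Let R be a noetherian local ring and t ∈ R a nonzerodivisor such that the quotient R/(t) is regular (or more generally such that Spec(R/(t)) is smooth over a base). Then the t-adic completion of R, as an algebra over R/(t), admits a ring homomorphism section; in particular there is a retraction ρ: Spec(R̂) → Spec(R/(t)) of the closed immersion Spec(R/(t)) → Spec(R̂) when R is a smooth algebra over an excellent base and R/(t) is smooth over the same base. -/

import Mathlib

/-!
Formal smoothness of `R ⧸ I` lifts the identity of `R ⧸ I` successively along the square-zero
thickenings `R ⧸ I ^ (n + 1) → R ⧸ I ^ n`; the compatible lifts assemble into a section of
`AdicCompletion I R → R ⧸ I` (`Algebra.FormallySmooth.exists_adicCompletionEvalOneₐ_comp_eq`).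
-/

universe u

open AdicCompletion

theorem AdicCompletion.eval_one_eq_mk_of_evalOneₐ_eq {R : Type*} [CommRing R] {I : Ideal R}
    {x : AdicCompletion I R} {r : R} (h : evalOneₐ I x = Ideal.Quotient.mk I r) :
    eval I R 1 x = Submodule.Quotient.mk r := by
  obtain ⟨s, hs⟩ := Ideal.Quotient.mk_surjective (evalₐ I 1 x)
  rw [← factorₐ_evalₐ_one, ← hs, Ideal.Quotient.factor_mk, Ideal.Quotient.eq] at h
  rw [← factor_evalₐ_eq_eval I x (by simp), ← hs, Ideal.Quotient.factor_mk]
  exact (Submodule.Quotient.eq _).mpr (by simpa using h)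

theorem section_of_adic_completion_of_smooth_divisor_general
    (k R : Type u) [CommRing k] [CommRing R] [Algebra k R]
    (t : R)
    [Algebra.FormallySmooth k (R ⧸ Ideal.span {t})] :
    ∃ σ : (R ⧸ Ideal.span {t}) →+* AdicCompletion (Ideal.span {t}) R,
      (∀ c : k, σ (algebraMap k _ c) = algebraMap R _ (algebraMap k R c)) ∧
      (∀ r : R,
        AdicCompletion.eval (Ideal.span {t}) R 1 (σ (Ideal.Quotient.mk _ r)) =
          Submodule.Quotient.mk r) := by
  obtain ⟨σ, hσ⟩ := Algebra.FormallySmooth.exists_adicCompletionEvalOneₐ_comp_eq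
    (AlgHom.id k (R ⧸ Ideal.span {t}))
  exact ⟨σ, σ.commutes, fun r ↦ eval_one_eq_mk_of_evalOneₐ_eq congr($hσ (Ideal.Quotient.mk _ r))⟩

/-- Let `R` be a noetherian local ring and `t ∈ R` a nonzerodivisor such that the quotient
`R/(t)` is (formally) smooth over the base `k` (e.g. `Spec (R/(t))` smooth over the base; over a
field this includes the case where `R/(t)` is regular).  Then the `t`-adic completion of `R`
admits, as an algebra over `R/(t)`, a ring homomorphism section: there is a `k`-algebra map
`σ : R/(t) → R̂` whose composite with the canonical projection `R̂ → R/(t)` is the identity.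
Geometrically this is the retraction `ρ : Spec R̂ → Spec (R/(t))` of the closed immersion
`Spec (R/(t)) → Spec R̂`. -/
theorem section_of_adic_completion_of_smooth_divisor
    (k R : Type u) [CommRing k] [CommRing R] [Algebra k R]
    [IsNoetherianRing R] [IsLocalRing R]
    (t : R) (ht : t ∈ nonZeroDivisors R)
    [Algebra.FormallySmooth k (R ⧸ Ideal.span {t})] :
    ∃ σ : (R ⧸ Ideal.span {t}) →+* AdicCompletion (Ideal.span {t}) R,
      (∀ c : k, σ (algebraMap k _ c) = algebraMap R _ (algebraMap k R c)) ∧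
      (∀ r : R,
        AdicCompletion.eval (Ideal.span {t}) R 1 (σ (Ideal.Quotient.mk _ r)) =
          Submodule.Quotient.mk r) :=
  section_of_adic_completion_of_smooth_divisor_general k R t
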